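/- Let p_1, p_2, p_3, p_4 ≥ 0 with p_1 + p_2 + p_3 + p_4 = 1 and let W be the binary input symmetric quaternary output kernel. Let Y be a random variable taking finitely many values in lists over {0,1}, and let Y^(4) be a random variable taking values in lists over {0⁻,0⁺,1⁻,1⁺} with |Y^(4)| = |Y| pointwise, such that for every y with P(Y=y) > 0 and every y′ with |y′| = |y|, P(Y^(4)=y′ | Y=y) = ∏_{i=1}^{|y|} W(y_i, y′_i). Then H(Y^(4)) ≥ H(Y) − E[|Y|] · log₂((p_1+p_3)² + (p_2+p_4)²). -/

import Mathlib

open scoped BigOperators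
open Classical

noncomputable section

/-- A finite probability space: a probability mass function on a finite type. -/
structure FinProb (Ω : Type*) [Fintype Ω] where
  p : Ω → ℝ
  nonneg : ∀ ω, 0 ≤ p ω
  sum_one : ∑ ω, p ω = 1

variable {Ω : Type*} [Fintype Ω]

/-- Probability of an event. -/
def pr (μ : FinProb Ω) (E : Ω → Prop) : ℝ :=
  ∑ ω, if E ω then μ.p ω else 0

/-- Shannon entropy (base 2) of a random variable with finitely many values. -/
def entropy {S : Type*} (μ : FinProb Ω) (U : Ω → S) : ℝ :=
  -∑ u ∈ Finset.univ.image U,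
    pr μ (fun ω => U ω = u) * Real.logb 2 (pr μ (fun ω => U ω = u))

/-- Conditional Shannon entropy `H(U | V)`. -/
def condEntropy {S T : Type*} (μ : FinProb Ω) (U : Ω → S) (V : Ω → T) : ℝ :=
  ∑ v ∈ (Finset.univ.image V).filter (fun v => 0 < pr μ (fun ω => V ω = v)),
    pr μ (fun ω => V ω = v) *
      (-∑ u ∈ Finset.univ.image U,
        (pr μ (fun ω => U ω = u ∧ V ω = v) / pr μ (fun ω => V ω = v)) *
          Real.logb 2 (pr μ (fun ω => U ω = u ∧ V ω = v) / pr μ (fun ω => V ω = v)))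

/-- Mutual information `I(U;V) = H(U) - H(U|V)`. -/
def mutualInfo {S T : Type*} (μ : FinProb Ω) (U : Ω → S) (V : Ω → T) : ℝ :=
  entropy μ U - condEntropy μ U V

/-- Expected length of a list-valued random variable. -/
def expLen {A : Type*} (μ : FinProb Ω) (Y : Ω → List A) : ℝ :=
  ∑ ω, μ.p ω * (Y ω).length

/-- The binary input symmetric quaternary output kernel. Input alphabet `{0,1}` is `Bool`;
the output alphabet `{0⁻,0⁺,1⁻,1⁺}` is modeled as `Bool × Bool`, where `(c, s)` denotes
`c⁻` when `s = false` and `c⁺` when `s = true`: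
`W b b⁻ = p1`, `W b b⁺ = p2`, `W b (1-b)⁻ = p3`, `W b (1-b)⁺ = p4`. -/
def quatKernel (p1 p2 p3 p4 : ℝ) : Bool → Bool × Bool → ℝ :=
  fun b k => if k.1 = b then (if k.2 then p2 else p1) else (if k.2 then p4 else p3)

/-! Gibbs' inequality `log t ≤ t - 1`, applied pointwise to `t = P(Z = Z ω) / (P(X = X ω) q^|X ω|)`,
reduces the bound to `E[P(Z = Z ω) / (P(X = X ω) q^|X ω|)] ≤ 1`. Grouping by the value `z` of the
output, the weights `μ ω / P(X = X ω)` on the fibre `{Z = z}` add up to at most `∏ᵢ ∑_c W(c, zᵢ)`,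
the weight of `z` summed over all inputs. Averaging this column product over the output of the
memoryless channel on an input `x` factorizes symbol by symbol, and each factor
`∑_k W(a, k) ∑_c W(c, k)` (a collision probability) is at most `q`. For the quaternary kernel this
collision sum equals `(p₁ + p₃)² + (p₂ + p₄)²` for both inputs. -/

lemma pr_nonneg (μ : FinProb Ω) (E : Ω → Prop) : 0 ≤ pr μ E :=
  Finset.sum_nonneg fun ω _ => by split_ifs <;> simp [μ.nonneg ω]

lemma p_le_pr (μ : FinProb Ω) {E : Ω → Prop} {ω : Ω} (h : E ω) : μ.p ω ≤ pr μ E := by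
  have := Finset.single_le_sum (s := Finset.univ) (f := fun ω => if E ω then μ.p ω else 0)
    (fun ω _ => by split_ifs <;> simp [μ.nonneg ω]) (Finset.mem_univ ω)
  simpa [pr, h] using this

lemma sum_eq_sum_image_sum_ite {S M : Type*} [DecidableEq S] [AddCommMonoid M] (U : Ω → S)
    (F : Ω → M) :
    ∑ ω, F ω = ∑ u ∈ Finset.univ.image U, ∑ ω, if U ω = u then F ω else 0 := by
  simp_rw [← Finset.sum_filter]
  exact (Finset.sum_fiberwise_of_maps_to
    (fun ω _ => Finset.mem_image_of_mem U (Finset.mem_univ ω)) F).symm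

lemma entropy_eq_neg_sum {S : Type*} (μ : FinProb Ω) (U : Ω → S) :
    entropy μ U = -∑ ω, μ.p ω * Real.logb 2 (pr μ fun ω' => U ω' = U ω) := by
  rw [entropy, sum_eq_sum_image_sum_ite U]
  congr 1
  refine Finset.sum_congr rfl fun u _ => ?_
  rw [pr, Finset.sum_mul]
  exact Finset.sum_congr rfl fun ω _ => by split_ifs with h <;> simp [h, pr]

lemma sum_ite_eq_ofFn {β M : Type*} [Fintype β] [AddCommMonoid M] {n : ℕ} {l : List β}
    (hl : l.length = n) (f : List β → M) :
    ∑ b : Fin n → β, (if l = List.ofFn b then f (List.ofFn b) else 0) = f l := by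
  obtain ⟨b₀, rfl⟩ : ∃ b₀ : Fin n → β, l = List.ofFn b₀ := by
    subst hl
    exact ⟨l.get, (List.ofFn_get l).symm⟩
  simp [List.ofFn_inj]

lemma logb_sub_logb_le {a b : ℝ} (ha : 0 < a) (hb : 0 < b) :
    Real.logb 2 a - Real.logb 2 b ≤ (a / b - 1) / Real.log 2 := by
  rw [← Real.logb_div ha.ne' hb.ne', Real.logb]
  exact div_le_div_of_nonneg_right (Real.log_le_sub_one_of_pos (div_pos ha hb))
    (Real.log_nonneg one_le_two)

structure IsMemorylessOutput {α β : Type*} (μ : FinProb Ω) (W : α → β → ℝ) (X : Ω → List α)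
    (Z : Ω → List β) : Prop where
  length_eq : ∀ ω, (Z ω).length = (X ω).length
  pr_cond : ∀ (n : ℕ) (x : Fin n → α) (z : Fin n → β),
    0 < pr μ (fun ω => X ω = List.ofFn x) →
    pr μ (fun ω => Z ω = List.ofFn z ∧ X ω = List.ofFn x) / pr μ (fun ω => X ω = List.ofFn x) =
      ∏ i, W (x i) (z i)

def outputExpect {α β : Type*} [Fintype β] (W : α → β → ℝ) (x : List α) (g : List β → ℝ) : ℝ :=
  ∑ z : Fin x.length → β, (∏ i, W (x.get i) (z i)) * g (List.ofFn z)

lemma outputExpect_le_one {α β : Type*} [Fintype α] [Fintype β] {W : α → β → ℝ} {q : ℝ}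
    (hW : ∀ a b, 0 ≤ W a b) (hq : 0 < q) (hcoll : ∀ a, ∑ k, W a k * ∑ c, W c k ≤ q)
    (x : List α) :
    outputExpect W x (fun z => (z.map fun k => ∑ c, W c k).prod / q ^ z.length) ≤ 1 := by
  unfold outputExpect
  calc _ = ∑ z : Fin x.length → β, ∏ i, W (x.get i) (z i) * (∑ c, W c (z i)) / q := by
        refine Finset.sum_congr rfl fun z _ => ?_
        beta_reduce
        rw [List.map_ofFn, List.prod_ofFn, List.length_ofFn, Finset.prod_div_distrib,
          Finset.prod_mul_distrib, Finset.prod_const, Finset.card_univ, Fintype.card_fin,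
          mul_div_assoc]
        rfl
    _ = ∏ i, ∑ k, W (x.get i) k * (∑ c, W c k) / q :=
        (Fintype.prod_sum fun i k => W (x.get i) k * (∑ c, W c k) / q).symm
    _ ≤ 1 := by
        refine Finset.prod_le_one (fun i _ => Finset.sum_nonneg fun k _ => ?_) fun i _ => ?_
        · exact div_nonneg (mul_nonneg (hW _ _) (Finset.sum_nonneg fun c _ => hW c k)) hq.le
        · rw [← Finset.sum_div, div_le_one hq]
          exact hcoll _

namespace IsMemorylessOutput

variable {α β : Type*} {μ : FinProb Ω} {W : α → β → ℝ} {X : Ω → List α} {Z : Ω → List β}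
  {q : ℝ}

lemma sum_ite_mul_output [Fintype β] (hZ : IsMemorylessOutput μ W X Z) (g : List β → ℝ)
    (x : List α) :
    ∑ ω, (if X ω = x then μ.p ω * g (Z ω) else 0) =
      pr μ (fun ω => X ω = x) * outputExpect W x g := by
  rcases (pr_nonneg μ _).eq_or_lt with hP | hP
  · rw [← hP, zero_mul]
    refine Finset.sum_eq_zero fun ω _ => ?_
    split_ifs with h
    · rw [le_antisymm (hP ▸ p_le_pr μ h) (μ.nonneg ω), zero_mul]
    · rfl
  have hcond := hZ.pr_cond x.length x.get
  simp only [List.ofFn_get] at hcond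
  have hsplit : ∀ ω, (if X ω = x then μ.p ω * g (Z ω) else 0) =
      ∑ z : Fin x.length → β,
        (if Z ω = List.ofFn z ∧ X ω = x then μ.p ω else 0) * g (List.ofFn z) := by
    intro ω
    by_cases h : X ω = x
    · rw [if_pos h, ← sum_ite_eq_ofFn (by rw [hZ.length_eq ω, h]) (fun l => μ.p ω * g l)]
      refine Finset.sum_congr rfl fun z _ => ?_
      split_ifs <;> simp_all
    · simp [h]
  rw [Finset.sum_congr rfl fun ω _ => hsplit ω, Finset.sum_comm, outputExpect, Finset.mul_sum]
  refine Finset.sum_congr rfl fun z _ => ?_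
  rw [← Finset.sum_mul, ← hcond z hP, ← mul_assoc, mul_div_cancel₀ _ hP.ne', pr]
  -- the two sides differ only in their `Decidable` instances
  congr!

lemma sum_mul_output [Fintype β] (hZ : IsMemorylessOutput μ W X Z) (g : List β → ℝ) :
    ∑ ω, μ.p ω * g (Z ω) = ∑ ω, μ.p ω * outputExpect W (X ω) g := by
  rw [sum_eq_sum_image_sum_ite X, sum_eq_sum_image_sum_ite X (fun ω => μ.p ω * _)]
  refine Finset.sum_congr rfl fun x _ => ?_
  rw [hZ.sum_ite_mul_output, pr, Finset.sum_mul]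
  exact Finset.sum_congr rfl fun ω _ => by split_ifs with h <;> simp [h]

lemma sum_ite_div_pr_le [Fintype α] (hZ : IsMemorylessOutput μ W X Z) (hW : ∀ a b, 0 ≤ W a b)
    (z : List β) :
    ∑ ω, (if Z ω = z then μ.p ω / pr μ (fun ω' => X ω' = X ω) else 0) ≤
      (z.map fun k => ∑ c, W c k).prod := by
  have hsplit : ∀ ω, (if Z ω = z then μ.p ω / pr μ (fun ω' => X ω' = X ω) else 0) =
      ∑ x : Fin z.length → α, (if Z ω = z ∧ X ω = List.ofFn x then μ.p ω else 0) /
        pr μ (fun ω' => X ω' = List.ofFn x) := by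
    intro ω
    by_cases h : Z ω = z
    · rw [if_pos h, ← sum_ite_eq_ofFn (by rw [← hZ.length_eq ω, h])
        (fun l => μ.p ω / pr μ (fun ω' => X ω' = l))]
      refine Finset.sum_congr rfl fun x _ => ?_
      split_ifs <;> simp_all
    · simp [h]
  calc ∑ ω, (if Z ω = z then μ.p ω / pr μ (fun ω' => X ω' = X ω) else 0)
      = ∑ x : Fin z.length → α, pr μ (fun ω => Z ω = List.ofFn z.get ∧ X ω = List.ofFn x) /
          pr μ (fun ω => X ω = List.ofFn x) := by
        rw [Finset.sum_congr rfl fun ω _ => hsplit ω, Finset.sum_comm, List.ofFn_get]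
        refine Finset.sum_congr rfl fun x _ => ?_
        rw [← Finset.sum_div]
        unfold pr
        congr!
    _ ≤ ∑ x : Fin z.length → α, ∏ i, W (x i) (z.get i) := by
        refine Finset.sum_le_sum fun x _ => ?_
        rcases (pr_nonneg μ fun ω => X ω = List.ofFn x).eq_or_lt with hP | hP
        · rw [← hP, div_zero]
          exact Finset.prod_nonneg fun i _ => hW _ _
        · exact (hZ.pr_cond _ x z.get hP).le
    _ = (z.map fun k => ∑ c, W c k).prod := by
        rw [← Fintype.prod_sum fun i c => W c (z.get i), ← List.prod_ofFn]
        conv_rhs => rw [← List.ofFn_get z, List.map_ofFn]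
        rfl

lemma sum_mul_ratio_le_one [Fintype α] [Fintype β] (hZ : IsMemorylessOutput μ W X Z)
    (hW : ∀ a b, 0 ≤ W a b) (hq : 0 < q) (hcoll : ∀ a, ∑ k, W a k * ∑ c, W c k ≤ q) :
    ∑ ω, μ.p ω * (pr μ (fun ω' => Z ω' = Z ω) /
      (pr μ (fun ω' => X ω' = X ω) * q ^ (X ω).length)) ≤ 1 := by
  set g : List β → ℝ := fun z => (z.map fun k => ∑ c, W c k).prod / q ^ z.length
  have hpr : ∀ ω, pr μ (fun ω' => Z ω' = Z ω) = ∑ ω', if Z ω' = Z ω then μ.p ω' else 0 :=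
    fun ω => by unfold pr; congr!
  calc _ = ∑ ω', μ.p ω' / q ^ (Z ω').length *
        ∑ ω, (if Z ω = Z ω' then μ.p ω / pr μ (fun ω'' => X ω'' = X ω) else 0) := by
        simp only [hpr, Finset.sum_div, Finset.mul_sum]
        rw [Finset.sum_comm]
        refine Finset.sum_congr rfl fun ω' _ => Finset.sum_congr rfl fun ω _ => ?_
        split_ifs with h h' h'
        · rw [← hZ.length_eq, h]
          ring
        · exact absurd h.symm h'
        · exact absurd h'.symm h
        · simp
    _ ≤ ∑ ω', μ.p ω' / q ^ (Z ω').length * ((Z ω').map fun k => ∑ c, W c k).prod :=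
        Finset.sum_le_sum fun ω' _ => mul_le_mul_of_nonneg_left (hZ.sum_ite_div_pr_le hW _)
          (div_nonneg (μ.nonneg ω') (pow_nonneg hq.le _))
    _ = ∑ ω', μ.p ω' * g (Z ω') :=
        Finset.sum_congr rfl fun ω' _ => by ring
    _ = ∑ ω, μ.p ω * outputExpect W (X ω) g := hZ.sum_mul_output g
    _ ≤ ∑ ω, μ.p ω := Finset.sum_le_sum fun ω _ =>
        mul_le_of_le_one_right (μ.nonneg ω) (outputExpect_le_one hW hq hcoll _)
    _ = 1 := μ.sum_one

theorem entropy_ge [Fintype α] [Fintype β] (hZ : IsMemorylessOutput μ W X Z)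
    (hW : ∀ a b, 0 ≤ W a b) (hq : 0 < q) (hcoll : ∀ a, ∑ k, W a k * ∑ c, W c k ≤ q) :
    entropy μ X - expLen μ X * Real.logb 2 q ≤ entropy μ Z := by
  set P : Ω → ℝ := fun ω => pr μ (fun ω' => X ω' = X ω)
  set P' : Ω → ℝ := fun ω => pr μ (fun ω' => Z ω' = Z ω)
  have hterm : ∀ ω,
      μ.p ω * (Real.logb 2 (P' ω) - (Real.logb 2 (P ω) + (X ω).length * Real.logb 2 q)) ≤
        μ.p ω * ((P' ω / (P ω * q ^ (X ω).length) - 1) / Real.log 2) := by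
    intro ω
    rcases (μ.nonneg ω).eq_or_lt with h0 | hpos
    · simp [← h0]
    have hP : 0 < P ω := hpos.trans_le (p_le_pr μ rfl)
    have hP' : 0 < P' ω := hpos.trans_le (p_le_pr μ rfl)
    have hqn : 0 < q ^ (X ω).length := pow_pos hq _
    rw [← Real.logb_pow, ← Real.logb_mul hP.ne' hqn.ne']
    exact mul_le_mul_of_nonneg_left (logb_sub_logb_le hP' (mul_pos hP hqn)) hpos.le
  have hratio : ∑ ω, μ.p ω * ((P' ω / (P ω * q ^ (X ω).length) - 1) / Real.log 2) ≤ 0 := by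
    have hS := hZ.sum_mul_ratio_le_one hW hq hcoll
    simp only [← mul_div_assoc, ← Finset.sum_div, mul_sub, mul_one, Finset.sum_sub_distrib,
      μ.sum_one]
    exact div_nonpos_of_nonpos_of_nonneg (by simpa [mul_div_assoc] using hS)
      (Real.log_nonneg one_le_two)
  have hsum := (Finset.sum_le_sum fun ω _ => hterm ω).trans hratio
  simp only [mul_sub, mul_add, Finset.sum_sub_distrib, Finset.sum_add_distrib] at hsum
  rw [entropy_eq_neg_sum, entropy_eq_neg_sum, expLen, Finset.sum_mul]
  simp only [← mul_assoc] at hsum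
  linarith

end IsMemorylessOutput

lemma quatKernel_nonneg {p1 p2 p3 p4 : ℝ} (h1 : 0 ≤ p1) (h2 : 0 ≤ p2) (h3 : 0 ≤ p3)
    (h4 : 0 ≤ p4) (b : Bool) (k : Bool × Bool) : 0 ≤ quatKernel p1 p2 p3 p4 b k := by
  unfold quatKernel
  split_ifs <;> assumption

lemma quatKernel_collision (p1 p2 p3 p4 : ℝ) (b : Bool) :
    ∑ k, quatKernel p1 p2 p3 p4 b k * ∑ c, quatKernel p1 p2 p3 p4 c k =
      (p1 + p3) ^ 2 + (p2 + p4) ^ 2 := by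
  cases b <;> simp [quatKernel, Fintype.sum_prod_type] <;> ring

/-- for the binary input symmetric quaternary output kernel,
`H(Y⁽⁴⁾) ≥ H(Y) − E[|Y|]·log₂((p1+p3)² + (p2+p4)²)`. -/
theorem stmt13 {Ω : Type*} [Fintype Ω] (μ : FinProb Ω)
    (p1 p2 p3 p4 : ℝ)
    (h1 : 0 ≤ p1) (h2 : 0 ≤ p2) (h3 : 0 ≤ p3) (h4 : 0 ≤ p4)
    (hsum : p1 + p2 + p3 + p4 = 1)
    (Y : Ω → List Bool) (Y4 : Ω → List (Bool × Bool))
    (hlen : ∀ ω, (Y4 ω).length = (Y ω).length)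
    (hcond : ∀ (n : ℕ) (y : Fin n → Bool) (y' : Fin n → Bool × Bool),
      0 < pr μ (fun ω => Y ω = List.ofFn y) →
      pr μ (fun ω => Y4 ω = List.ofFn y' ∧ Y ω = List.ofFn y) /
        pr μ (fun ω => Y ω = List.ofFn y) = ∏ i, quatKernel p1 p2 p3 p4 (y i) (y' i)) :
    entropy μ Y4 ≥ entropy μ Y -
      expLen μ Y * Real.logb 2 ((p1 + p3) ^ 2 + (p2 + p4) ^ 2) := by
  have hq : 0 < (p1 + p3) ^ 2 + (p2 + p4) ^ 2 := by
    nlinarith [sq_nonneg (p1 + p3 - (p2 + p4))]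
  exact IsMemorylessOutput.entropy_ge ⟨hlen, hcond⟩ (quatKernel_nonneg h1 h2 h3 h4) hq
    fun b => (quatKernel_collision p1 p2 p3 p4 b).le

end
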